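/- arXiv:2410.04907 — 4 statements merged into one kernel-verified Lean document; each statement's English description precedes it below -/
import Mathlib

section
/- Let P = Q + C ⊆ ℝ^d with Q a nonempty compact convex set and C a closed convex cone, and let x ∈ P be such that x is contained in some bounded face of P (equivalently, x minimizes some linear functional whose minimizer set over P is bounded). Then for every c ∈ C with c ≠ 0, we have x − c ∉ P. -/
/-!
Since `C + C ⊆ C`, the whole ray `x + t • c` (`t ≥ 0`) lies in `P`. If also `x - c ∈ P`, then
`x` minimizing `⟪u, ·⟫` forces `⟪u, c⟫ = 0`, so the ray lies in the face `P^u`, which is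
bounded only if `c = 0`.
-/

open Pointwise RealInnerProductSpace

theorem add_mem_of_convex_of_smul_mem {E : Type*} [AddCommGroup E] [Module ℝ E] {C : Set E}
    (hCconv : Convex ℝ C) (hCcone : ∀ c ∈ C, ∀ l : ℝ, 0 ≤ l → l • c ∈ C)
    {a b : E} (ha : a ∈ C) (hb : b ∈ C) : a + b ∈ C := by
  have hmid : (1 / 2 : ℝ) • a + (1 / 2 : ℝ) • b ∈ C :=
    hCconv ha hb (by norm_num) (by norm_num) (by norm_num)
  convert hCcone _ hmid 2 (by norm_num) using 1
  rw [smul_add, smul_smul, smul_smul]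
  norm_num

theorem add_mem_add_of_add_mem {α : Type*} [AddSemigroup α] {Q C : Set α}
    (hC : ∀ a ∈ C, ∀ b ∈ C, a + b ∈ C) {x c : α} (hx : x ∈ Q + C) (hc : c ∈ C) :
    x + c ∈ Q + C := by
  obtain ⟨q, hq, c', hc', rfl⟩ := hx
  exact ⟨q, hq, c' + c, hC _ hc' _ hc, (add_assoc q c' c).symm⟩

theorem eq_zero_of_forall_add_smul_mem_isBounded {E : Type*} [NormedAddCommGroup E]
    [NormedSpace ℝ E] {S : Set E} (hS : Bornology.IsBounded S) {x c : E}
    (hray : ∀ t : ℝ, 0 ≤ t → x + t • c ∈ S) : c = 0 := by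
  obtain ⟨R, hR⟩ := Metric.isBounded_iff.1 hS
  by_contra hc
  have hc_pos : 0 < ‖c‖ := norm_pos_iff.2 hc
  set t := (|R| + 1) / ‖c‖
  have ht : 0 ≤ t := by positivity
  have hdist : t * ‖c‖ ≤ R := by
    simpa [dist_eq_norm, norm_smul, abs_of_nonneg ht] using hR (hray t ht) (hray 0 le_rfl)
  rw [div_mul_cancel₀ _ hc_pos.ne'] at hdist
  linarith [le_abs_self R]

section Face

variable {E : Type*} [NormedAddCommGroup E] [InnerProductSpace ℝ E]

/-- The face `P^u` of `P` in direction `u`. -/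
def face (P : Set E) (u : E) : Set E := {z ∈ P | ∀ y ∈ P, ⟪u, z⟫ ≤ ⟪u, y⟫}

-- `x - c, x + c ∈ P` and minimality of `x` force `⟪u, c⟫ = 0`.
theorem add_smul_mem_face {P : Set E} {u x c : E} (hx : x ∈ face P u) (hsub : x - c ∈ P)
    (hray : ∀ t : ℝ, 0 ≤ t → x + t • c ∈ P) (t : ℝ) (ht : 0 ≤ t) :
    x + t • c ∈ face P u := by
  have hle : ⟪u, c⟫ ≤ 0 := by
    have := hx.2 _ hsub
    rw [inner_sub_right] at this
    linarith
  have hge : 0 ≤ ⟪u, c⟫ := by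
    have := hx.2 _ (by simpa using hray 1 zero_le_one)
    rw [inner_add_right] at this
    linarith
  refine ⟨hray t ht, fun y hy => ?_⟩
  rw [inner_add_right, inner_smul_right, le_antisymm hle hge, mul_zero, add_zero]
  exact hx.2 y hy

end Face

theorem mem_bounded_face_sub_not_mem_general (d : ℕ) (Q C : Set (EuclideanSpace ℝ (Fin d)))
    (hCconv : Convex ℝ C)
    (hCcone : ∀ c ∈ C, ∀ l : ℝ, 0 ≤ l → l • c ∈ C)
    (x : EuclideanSpace ℝ (Fin d))
    (hface : ∃ u : EuclideanSpace ℝ (Fin d),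
      x ∈ {z ∈ Q + C | ∀ y ∈ Q + C, inner ℝ u z ≤ (inner ℝ u y : ℝ)} ∧
      Bornology.IsBounded {z ∈ Q + C | ∀ y ∈ Q + C, inner ℝ u z ≤ (inner ℝ u y : ℝ)}) :
    ∀ c ∈ C, c ≠ 0 → x - c ∉ Q + C := by
  intro c hc hc0 hsub
  obtain ⟨u, hxF, hbdd⟩ := hface
  have hray : ∀ t : ℝ, 0 ≤ t → x + t • c ∈ Q + C := fun t ht =>
    add_mem_add_of_add_mem (fun _ ha _ hb => add_mem_of_convex_of_smul_mem hCconv hCcone ha hb)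
      hxF.1 (hCcone c hc t ht)
  exact hc0 (eq_zero_of_forall_add_smul_mem_isBounded (S := face (Q + C) u) hbdd
    (add_smul_mem_face hxF hsub hray))

/-- If `x` lies in a bounded face of `P = Q + C` (i.e. `x` minimizes some linear
functional whose minimizer set over `P` is bounded), then `x − c ∉ P` for every
nonzero `c` in the recession cone `C`. -/
theorem mem_bounded_face_sub_not_mem (d : ℕ) (Q C : Set (EuclideanSpace ℝ (Fin d)))
    (hQne : Q.Nonempty) (hQcpt : IsCompact Q) (hQconv : Convex ℝ Q)
    (hCclosed : IsClosed C) (hCconv : Convex ℝ C)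
    (hCcone : ∀ c ∈ C, ∀ l : ℝ, 0 ≤ l → l • c ∈ C)
    (x : EuclideanSpace ℝ (Fin d)) (hx : x ∈ Q + C)
    (hface : ∃ u : EuclideanSpace ℝ (Fin d),
      x ∈ {z ∈ Q + C | ∀ y ∈ Q + C, inner ℝ u z ≤ (inner ℝ u y : ℝ)} ∧
      Bornology.IsBounded {z ∈ Q + C | ∀ y ∈ Q + C, inner ℝ u z ≤ (inner ℝ u y : ℝ)}) :
    ∀ c ∈ C, c ≠ 0 → x - c ∉ Q + C :=
  mem_bounded_face_sub_not_mem_general d Q C hCconv hCcone x hface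
end

section
/- Let P ⊆ ℝ^d be a convex set with recession cone C, and let x ∈ P. If x does not lie in the relative interior of any bounded face of P, i.e., there exists c ∈ C \ {0} and ε > 0 with x − εc ∈ P, then x is not a minimizer over P of any linear functional u whose minimizer set over P is bounded. Conversely, if x − c ∉ P for all c ∈ C \ {0}, and P is a polyhedron, then x lies in a bounded face of P. -/
/-!
If `x` minimizes `⟪u, ·⟫` over `P`, `c` is a recession direction and `x - εc ∈ P`, then
`⟪u, c⟫ = 0`, so the whole ray `x + ℝ≥0 • c` consists of minimizers and the face is unbounded.

For the converse write `P = {z | ∀ p ∈ s, ⟪a_p, z⟫ ≤ b_p}` and take `u = -∑ a_p` over the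
constraints active at `x`: its minimizers are the points of `P` where these constraints are tight.
If this face were unbounded, a limit of normalized points of it escaping to infinity would be a
nonzero `c` with `⟪a_p, c⟫ ≤ 0` for all `p` and `⟪a_p, c⟫ = 0` for the active ones. Such a `c` is
a recession direction of `P` and `x - εc ∈ P` for small `ε > 0`.
-/

open Bornology Filter Finset Metric Topology

section RecessionCone

variable {E : Type*} [AddCommGroup E] [Module ℝ E]

def recessionCone (P : Set E) : Set E :=
  {c | ∀ x ∈ P, ∀ l : ℝ, 0 ≤ l → x + l • c ∈ P}

theorem smul_mem_recessionCone {P : Set E} {c : E} (hc : c ∈ recessionCone P) {a : ℝ}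
    (ha : 0 ≤ a) : a • c ∈ recessionCone P := fun x hx l hl => by
  rw [smul_smul]
  exact hc x hx (l * a) (mul_nonneg hl ha)

end RecessionCone

theorem not_isBounded_of_forall_add_smul_mem {E : Type*} [NormedAddCommGroup E]
    [NormedSpace ℝ E] {S : Set E} {x c : E} (hc : c ≠ 0) (h : ∀ l : ℝ, 0 ≤ l → x + l • c ∈ S) :
    ¬IsBounded S := by
  intro hS
  obtain ⟨r, hr⟩ := (isBounded_iff_subset_closedBall x).1 hS
  have hc' : 0 < ‖c‖ := norm_pos_iff.2 hc
  have hl : 0 ≤ (|r| + 1) / ‖c‖ := by positivity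
  have h := hr (h _ hl)
  rw [mem_closedBall, dist_eq_norm, add_sub_cancel_left, norm_smul, Real.norm_of_nonneg hl,
    div_mul_cancel₀ _ hc'.ne'] at h
  linarith [le_abs_self r]

theorem exists_ne_zero_forall_le_zero_of_not_isBounded {E : Type*} [NormedAddCommGroup E]
    [NormedSpace ℝ E] [ProperSpace E] {S : Set E} (hS : ¬IsBounded S) :
    ∃ c ≠ (0 : E), ∀ g : StrongDual ℝ E, BddAbove (g '' S) → g c ≤ 0 := by
  have hlarge : ∀ n : ℕ, ∃ z ∈ S, (n : ℝ) < ‖z‖ := by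
    intro n
    by_contra! h
    exact hS (isBounded_iff_forall_norm_le.2 ⟨n, h⟩)
  choose z hzS hzn using hlarge
  have hz_pos : ∀ n, 0 < ‖z n‖ := fun n => (Nat.cast_nonneg n).trans_lt (hzn n)
  have hw : ∀ n, ‖z n‖⁻¹ • z n ∈ sphere (0 : E) 1 := fun n => by
    simp [norm_smul, (hz_pos n).ne']
  obtain ⟨c, hc, φ, hφ, hlim⟩ := (isCompact_sphere (0 : E) 1).tendsto_subseq hw
  have hinv : Tendsto (fun n => ‖z (φ n)‖⁻¹) atTop (𝓝 0) :=
    tendsto_inv_atTop_zero.comp <| tendsto_atTop_mono (fun n => (hzn (φ n)).le)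
      (tendsto_natCast_atTop_atTop.comp hφ.tendsto_atTop)
  refine ⟨c, ne_of_mem_sphere hc one_ne_zero, fun g ⟨B, hB⟩ => ?_⟩
  refine le_of_tendsto_of_tendsto ((g.continuous.tendsto c).comp hlim)
    (by simpa using hinv.mul_const B) (Eventually.of_forall fun n => ?_)
  simp only [Function.comp_apply, map_smul, smul_eq_mul]
  exact mul_le_mul_of_nonneg_left (hB (Set.mem_image_of_mem g (hzS _)))
    (inv_nonneg.2 (norm_nonneg _))

variable {E : Type*} [NormedAddCommGroup E] [InnerProductSpace ℝ E]

def minFace (P : Set E) (u : E) : Set E :=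
  {z ∈ P | ∀ y ∈ P, inner ℝ u z ≤ inner ℝ u y}

section MinFace

variable {P : Set E} {u x c : E}

theorem inner_eq_zero_of_mem_minFace (hx : x ∈ minFace P u) (hxc : x + c ∈ P) {ε : ℝ}
    (hε : 0 < ε) (hxεc : x - ε • c ∈ P) : inner ℝ u c = 0 := by
  have h₁ := hx.2 _ hxc
  have h₂ := hx.2 _ hxεc
  rw [inner_add_right] at h₁
  rw [inner_sub_right, inner_smul_right] at h₂
  nlinarith

theorem add_smul_mem_minFace (hx : x ∈ minFace P u) (huc : inner ℝ u c = 0) {l : ℝ}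
    (h : x + l • c ∈ P) : x + l • c ∈ minFace P u := by
  refine ⟨h, fun y hy => ?_⟩
  rw [inner_add_right, inner_smul_right, huc, mul_zero, add_zero]
  exact hx.2 y hy

theorem notMem_minFace_of_isBounded (hc : c ∈ recessionCone P) (hc0 : c ≠ 0) {ε : ℝ}
    (hε : 0 < ε) (hxεc : x - ε • c ∈ P) (hb : IsBounded (minFace P u)) : x ∉ minFace P u := by
  intro hx
  have huc := inner_eq_zero_of_mem_minFace hx (by simpa using hc x hx.1 1 zero_le_one) hε hxεc
  exact not_isBounded_of_forall_add_smul_mem hc0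
    (fun l hl => add_smul_mem_minFace hx huc (hc x hx.1 l hl)) hb

end MinFace

section Polyhedron

def polyhedron (s : Finset (E × ℝ)) : Set E :=
  {z | ∀ p ∈ s, inner ℝ p.1 z ≤ p.2}

open Classical in
noncomputable def activeSet (s : Finset (E × ℝ)) (x : E) : Finset (E × ℝ) :=
  s.filter fun p => inner ℝ p.1 x = p.2

variable {s : Finset (E × ℝ)} {x c : E}

theorem mem_recessionCone_polyhedron (hc : ∀ p ∈ s, inner ℝ p.1 c ≤ 0) :
    c ∈ recessionCone (polyhedron s) := fun y hy l hl p hp => by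
  rw [inner_add_right, inner_smul_right]
  nlinarith [hy p hp, hc p hp]

theorem exists_pos_sub_smul_mem_polyhedron (hx : x ∈ polyhedron s)
    (hc : ∀ p ∈ activeSet s x, inner ℝ p.1 c = 0) : ∃ ε > (0 : ℝ), x - ε • c ∈ polyhedron s := by
  have hev : ∀ p ∈ s, ∀ᶠ t in 𝓝 (0 : ℝ), inner ℝ p.1 (x - t • c) ≤ p.2 := by
    intro p hp
    rcases (hx p hp).lt_or_eq with hlt | heq
    · have hcont : Continuous fun t : ℝ => inner ℝ p.1 (x - t • c) := by fun_prop
      exact (hcont.continuousAt.eventually_lt continuousAt_const (by simpa using hlt)).mono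
        fun t => le_of_lt
    · refine Eventually.of_forall fun t => ?_
      rw [inner_sub_right, inner_smul_right, hc p (mem_filter.2 ⟨hp, heq⟩), heq]
      simp
  obtain ⟨ε, hxεc, hε⟩ := (((eventually_all_finset s).2 hev).filter_mono
    nhdsWithin_le_nhds |>.and self_mem_nhdsWithin).exists (f := 𝓝[>] (0 : ℝ))
  exact ⟨ε, hε, hxεc⟩

theorem mem_minFace_neg_sum_activeSet (hx : x ∈ polyhedron s) :
    x ∈ minFace (polyhedron s) (-∑ p ∈ activeSet s x, p.1) := by
  refine ⟨hx, fun y hy => ?_⟩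
  simp only [inner_neg_left, sum_inner, neg_le_neg_iff]
  refine sum_le_sum fun p hp => ?_
  rw [(mem_filter.1 hp).2]
  exact hy p (mem_filter.1 hp).1

theorem inner_eq_of_mem_minFace_neg_sum_activeSet (hx : x ∈ polyhedron s) {z : E}
    (hz : z ∈ minFace (polyhedron s) (-∑ p ∈ activeSet s x, p.1)) {p : E × ℝ}
    (hp : p ∈ activeSet s x) : inner ℝ p.1 z = p.2 := by
  have hle : ∀ q ∈ activeSet s x, inner ℝ q.1 z ≤ q.2 := fun q hq => hz.1 q (mem_filter.1 hq).1
  have hzx := hz.2 x hx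
  simp only [inner_neg_left, sum_inner, neg_le_neg_iff] at hzx
  have hge : ∑ q ∈ activeSet s x, q.2 ≤ ∑ q ∈ activeSet s x, inner ℝ q.1 z :=
    calc ∑ q ∈ activeSet s x, q.2 = ∑ q ∈ activeSet s x, inner ℝ q.1 x :=
          sum_congr rfl fun q hq => (mem_filter.1 hq).2.symm
      _ ≤ _ := hzx
  exact (sum_eq_sum_iff_of_le hle).1 (le_antisymm (sum_le_sum hle) hge) p hp

theorem isBounded_minFace_neg_sum_activeSet [FiniteDimensional ℝ E] (hx : x ∈ polyhedron s)
    (hrec : ∀ c ∈ recessionCone (polyhedron s), c ≠ 0 → x - c ∉ polyhedron s) :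
    IsBounded (minFace (polyhedron s) (-∑ p ∈ activeSet s x, p.1)) := by
  by_contra hF
  obtain ⟨c, hc0, hc⟩ := exists_ne_zero_forall_le_zero_of_not_isBounded hF
  have hle : ∀ p ∈ s, inner ℝ p.1 c ≤ 0 := fun p hp =>
    hc (innerSL ℝ p.1) ⟨p.2, Set.forall_mem_image.2 fun z hz => hz.1 p hp⟩
  have hge : ∀ p ∈ activeSet s x, 0 ≤ inner ℝ p.1 c := fun p hp => by
    have := hc (-innerSL ℝ p.1) ⟨-p.2, Set.forall_mem_image.2 fun z hz => by
      simp [inner_eq_of_mem_minFace_neg_sum_activeSet hx hz hp]⟩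
    simpa using this
  obtain ⟨ε, hε, hxεc⟩ := exists_pos_sub_smul_mem_polyhedron hx fun p hp =>
    le_antisymm (hle p (mem_filter.1 hp).1) (hge p hp)
  exact hrec (ε • c) (smul_mem_recessionCone (mem_recessionCone_polyhedron hle) hε.le)
    (smul_ne_zero hε.ne' hc0) hxεc

end Polyhedron

theorem bounded_face_recession_general (d : ℕ) (P C : Set (EuclideanSpace ℝ (Fin d)))
    (hC : C = {c | ∀ x ∈ P, ∀ l : ℝ, 0 ≤ l → x + l • c ∈ P})
    (x : EuclideanSpace ℝ (Fin d)) (hx : x ∈ P) :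
    ((∃ c ∈ C, c ≠ 0 ∧ ∃ ε > (0:ℝ), x - ε • c ∈ P) →
      ∀ u : EuclideanSpace ℝ (Fin d),
        Bornology.IsBounded {z ∈ P | ∀ y ∈ P, inner ℝ u z ≤ (inner ℝ u y : ℝ)} →
        x ∉ {z ∈ P | ∀ y ∈ P, inner ℝ u z ≤ (inner ℝ u y : ℝ)}) ∧
    (((∀ c ∈ C, c ≠ 0 → x - c ∉ P) ∧
        ∃ s : Finset (EuclideanSpace ℝ (Fin d) × ℝ),
          P = {z | ∀ p ∈ s, inner ℝ p.1 z ≤ (p.2 : ℝ)}) →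
      ∃ u : EuclideanSpace ℝ (Fin d),
        x ∈ {z ∈ P | ∀ y ∈ P, inner ℝ u z ≤ (inner ℝ u y : ℝ)} ∧
        Bornology.IsBounded {z ∈ P | ∀ y ∈ P, inner ℝ u z ≤ (inner ℝ u y : ℝ)}) := by
  subst hC
  refine ⟨fun ⟨c, hc, hc0, ε, hε, hxεc⟩ u hb => notMem_minFace_of_isBounded hc hc0 hε hxεc hb, ?_⟩
  rintro ⟨hrec, s, rfl⟩
  exact ⟨_, mem_minFace_neg_sum_activeSet hx, isBounded_minFace_neg_sum_activeSet hx hrec⟩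

/-- Two claims about bounded faces of a convex set `P` with recession cone `C`:
(1) if `x − εc ∈ P` for some nonzero recession direction `c` and `ε > 0`, then `x`
is not a minimizer over `P` of any linear functional with bounded minimizer set;
(2) conversely, if `P` is a polyhedron and `x − c ∉ P` for all nonzero `c ∈ C`,
then `x` lies in a bounded face of `P`. -/
theorem bounded_face_recession (d : ℕ) (P C : Set (EuclideanSpace ℝ (Fin d)))
    (hPconv : Convex ℝ P)
    (hC : C = {c | ∀ x ∈ P, ∀ l : ℝ, 0 ≤ l → x + l • c ∈ P})
    (x : EuclideanSpace ℝ (Fin d)) (hx : x ∈ P) :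
    ((∃ c ∈ C, c ≠ 0 ∧ ∃ ε > (0:ℝ), x - ε • c ∈ P) →
      ∀ u : EuclideanSpace ℝ (Fin d),
        Bornology.IsBounded {z ∈ P | ∀ y ∈ P, inner ℝ u z ≤ (inner ℝ u y : ℝ)} →
        x ∉ {z ∈ P | ∀ y ∈ P, inner ℝ u z ≤ (inner ℝ u y : ℝ)}) ∧
    (((∀ c ∈ C, c ≠ 0 → x - c ∉ P) ∧
        ∃ s : Finset (EuclideanSpace ℝ (Fin d) × ℝ),
          P = {z | ∀ p ∈ s, inner ℝ p.1 z ≤ (p.2 : ℝ)}) →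
      ∃ u : EuclideanSpace ℝ (Fin d),
        x ∈ {z ∈ P | ∀ y ∈ P, inner ℝ u z ≤ (inner ℝ u y : ℝ)} ∧
        Bornology.IsBounded {z ∈ P | ∀ y ∈ P, inner ℝ u z ≤ (inner ℝ u y : ℝ)}) :=
  bounded_face_recession_general d P C hC x hx
end

section
/- Let f, g : ℝ^n → ℝ be continuous functions such that for every permutation π of [n], both f and g are affine on the cone P_π = {x ∈ ℝ^n : x_{π(1)} ≤ x_{π(2)} ≤ ⋯ ≤ x_{π(n)}}. If f(𝟙_S) = g(𝟙_S) for every subset S ⊆ [n], then f = g. -/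
private lemma braid_key (n : ℕ) (c : Fin n → ℝ) (e : ℝ)
    (h : ∀ k : ℕ, k ≤ n → (∑ i : Fin n, if k ≤ (i : ℕ) then c i else 0) + e = 0) :
    (∀ i, c i = 0) ∧ e = 0 := by
  have he : e = 0 := by
    have h0 := h n le_rfl
    have : (∑ i : Fin n, if n ≤ (i : ℕ) then c i else 0) = 0 := by
      apply Finset.sum_eq_zero
      intro i _
      rw [if_neg (Nat.not_le.2 i.is_lt)]
    linarith
  refine ⟨?_, he⟩
  intro j
  have h1 := h j (le_of_lt j.is_lt)
  have h2 := h (j + 1) j.is_lt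
  have hterm : ∀ i : Fin n,
      (if (j : ℕ) ≤ (i : ℕ) then c i else 0) - (if (j : ℕ) + 1 ≤ (i : ℕ) then c i else 0)
        = if i = j then c i else 0 := by
    intro i
    rcases eq_or_ne i j with rfl | hne
    · simp
    · rw [if_neg hne]
      have hv : (i : ℕ) ≠ (j : ℕ) := fun hh => hne (Fin.ext hh)
      by_cases hle : (j : ℕ) ≤ (i : ℕ)
      · rw [if_pos hle, if_pos (by omega)]; ring
      · rw [if_neg hle, if_neg (by omega)]; ring
  have hsum : (∑ i : Fin n, if (j : ℕ) ≤ (i : ℕ) then c i else 0)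
      - (∑ i : Fin n, if (j : ℕ) + 1 ≤ (i : ℕ) then c i else 0) = c j := by
    rw [← Finset.sum_sub_distrib]
    simp_rw [hterm]
    simp
  linarith

/-- Two continuous functions that are affine on every maximal cone of the braid
arrangement and agree on all 0/1 indicator vectors are equal. -/
theorem eq_of_affine_on_braid_cones_of_eq_on_indicators (n : ℕ)
    (f g : (Fin n → ℝ) → ℝ) (hf : Continuous f) (hg : Continuous g)
    (haf : ∀ π : Equiv.Perm (Fin n), ∃ (a : Fin n → ℝ) (b : ℝ),
      ∀ x ∈ {x : Fin n → ℝ | ∀ i j : Fin n, i ≤ j → x (π i) ≤ x (π j)},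
        f x = ∑ i, a i * x i + b)
    (hag : ∀ π : Equiv.Perm (Fin n), ∃ (a : Fin n → ℝ) (b : ℝ),
      ∀ x ∈ {x : Fin n → ℝ | ∀ i j : Fin n, i ≤ j → x (π i) ≤ x (π j)},
        g x = ∑ i, a i * x i + b)
    (hind : ∀ S : Finset (Fin n),
      f (fun i => if i ∈ S then 1 else 0) = g (fun i => if i ∈ S then 1 else 0)) :
    f = g := by
  funext x
  set π := Tuple.sort x with hπ
  have hx : x ∈ {x : Fin n → ℝ | ∀ i j : Fin n, i ≤ j → x (π i) ≤ x (π j)} := by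
    intro i j hij
    exact Tuple.monotone_sort x hij
  obtain ⟨a, b, hfa⟩ := haf π
  obtain ⟨a', b', hga⟩ := hag π
  -- equalities at the chain of indicator vectors
  have hchain : ∀ k : ℕ, k ≤ n →
      (∑ j : Fin n, if k ≤ (j : ℕ) then a (π j) - a' (π j) else 0) + (b - b') = 0 := by
    intro k hk
    set v : Fin n → ℝ := fun i => if k ≤ ((π.symm i : Fin n) : ℕ) then 1 else 0 with hv
    have hvmem : v ∈ {x : Fin n → ℝ | ∀ i j : Fin n, i ≤ j → x (π i) ≤ x (π j)} := by
      intro i j hij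
      simp only [hv, Equiv.symm_apply_apply]
      by_cases h1 : k ≤ (i : ℕ)
      · rw [if_pos h1, if_pos (le_trans h1 hij)]
      · rw [if_neg h1]
        split <;> norm_num
    have hvind : v = fun i => if i ∈ Finset.univ.filter (fun i => k ≤ ((π.symm i : Fin n) : ℕ)) then (1:ℝ) else 0 := by
      funext i
      simp [hv]
    have heq : f v = g v := by rw [hvind]; exact hind _
    rw [hfa v hvmem, hga v hvmem] at heq
    have hre : ∀ (w : Fin n → ℝ), (∑ i, w i * v i) = ∑ j : Fin n, if k ≤ (j : ℕ) then w (π j) else 0 := by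
      intro w
      rw [← Equiv.sum_comp π (fun i => w i * v i)]
      apply Finset.sum_congr rfl
      intro j _
      simp only [hv, Equiv.symm_apply_apply, mul_ite, mul_one, mul_zero]
    rw [hre a, hre a'] at heq
    have hsplit : (∑ j : Fin n, if k ≤ (j : ℕ) then a (π j) - a' (π j) else 0)
        = (∑ j : Fin n, if k ≤ (j : ℕ) then a (π j) else 0)
          - ∑ j : Fin n, if k ≤ (j : ℕ) then a' (π j) else 0 := by
      rw [← Finset.sum_sub_distrib]
      apply Finset.sum_congr rfl
      intro j _
      split <;> simp
    rw [hsplit]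
    linarith
  obtain ⟨hc, he⟩ := braid_key n (fun j => a (π j) - a' (π j)) (b - b') hchain
  have ha : ∀ i, a i = a' i := by
    intro i
    have := hc (π.symm i)
    simpa [sub_eq_zero] using this
  rw [hfa x hx, hga x hx]
  have : b = b' := by linarith
  simp [ha, this]
end

section
/- Let F : 2^{[n]} → ℝ be a set function with Lovász extension f : ℝ^n → ℝ. Then F is submodular if and only if f is a convex function. -/
/-- A set function `F : 2^[n] → ℝ` is submodular if
`F(A) + F(B) ≥ F(A ∪ B) + F(A ∩ B)` for all `A, B`. -/
def Submodular {n : ℕ} (F : Finset (Fin n) → ℝ) : Prop :=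
  ∀ A B : Finset (Fin n), F (A ∪ B) + F (A ∩ B) ≤ F A + F B

/-- The Lovász extension of a set function `F : 2^[n] → ℝ`:
writing `y_1 ≥ y_2 ≥ ⋯ ≥ y_n` for the entries of `x` in decreasing order and
`S_k` for the set of indices of the `k` largest entries (so `S_0 = ∅`),
`f(x) = F(∅) + Σ_{k=1}^n y_k (F(S_k) − F(S_{k−1}))`. -/
noncomputable def lovasz {n : ℕ} (F : Finset (Fin n) → ℝ) (x : Fin n → ℝ) : ℝ :=
  F ∅ + ∑ j : Fin n, x (Tuple.sort x j.rev) *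
    (F (Finset.univ.filter fun i : Fin n => n - ((j : ℕ) + 1) ≤ ((Tuple.sort x).symm i : ℕ)) -
     F (Finset.univ.filter fun i : Fin n => n - (j : ℕ) ≤ ((Tuple.sort x).symm i : ℕ)))

/-!
For a permutation `σ` of `[n]` let `S_j` be the set of its first `j` values and let the greedy
vector `g^σ` have `g^σ (σ j) = F (S_{j+1}) - F (S_j)`. If `σ` lists `x` in decreasing order then
`f x = F ∅ + ⟪x, g^σ⟫`. When `F` is submodular, every `g^τ` satisfies `g^τ(A) ≤ F A - F ∅`, with
equality for `A = [n]` and for `τ = σ`, `A = S_j`; summation by parts along the decreasing order of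
`x` turns this into `⟪x, g^τ⟫ ≤ ⟪x, g^σ⟫`. So `f` is the pointwise maximum of the affine maps
`F ∅ + ⟪·, g^τ⟫`, hence convex.

Conversely, for `C ⊆ D` both `C` and `D` are superlevel sets of `𝟙_C + 𝟙_D`, which gives
`f (𝟙_C + 𝟙_D) = F C + F D - F ∅`. As `𝟙_A + 𝟙_B = 𝟙_{A ∩ B} + 𝟙_{A ∪ B}` is the midpoint of
`2 𝟙_A` and `2 𝟙_B`, convexity of `f` at this midpoint is the submodular inequality for `A, B`.
-/

open Finset Matrix

theorem sum_mul_nonneg_of_antitone_of_nonneg {n : ℕ} {y w : Fin n → ℝ} (hy : Antitone y)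
    (hy₀ : 0 ≤ y) (hw : ∀ m ≤ n, 0 ≤ ∑ j : Fin n with j.val < m, w j) :
    0 ≤ ∑ j, y j * w j := by
  induction n with
  | zero => simp
  | succ k ih =>
    -- Summation by parts, one term at a time: `y - y (last k)` is still antitone and nonnegative.
    have hsplit : ∑ j, y j * w j = ∑ j : Fin k, (y j.castSucc - y (Fin.last k)) * w j.castSucc
        + y (Fin.last k) * ∑ j, w j := by
      simp only [Fin.sum_univ_castSucc, sub_mul, sum_sub_distrib, ← mul_sum]
      ring
    have hpartial : ∀ m ≤ k, ∑ j : Fin k with j.val < m, w j.castSucc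
        = ∑ j : Fin (k + 1) with j.val < m, w j := by
      intro m hm
      simp [sum_filter, Fin.sum_univ_castSucc, hm.not_gt]
    rw [hsplit]
    refine add_nonneg (ih (fun i j hij => ?_) (fun j => ?_) fun m hm => ?_) ?_
    · exact sub_le_sub_right (hy (Fin.castSucc_le_castSucc_iff.mpr hij)) _
    · exact sub_nonneg.mpr (hy (Fin.le_last _))
    · exact hpartial m hm ▸ hw m (by omega)
    · have htotal := hw (k + 1) le_rfl
      rw [filter_true_of_mem fun j _ => j.isLt] at htotal
      exact mul_nonneg (hy₀ _) htotal

theorem sum_mul_nonneg_of_antitone {n : ℕ} {y w : Fin n → ℝ} (hy : Antitone y)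
    (hw : ∀ m ≤ n, 0 ≤ ∑ j : Fin n with j.val < m, w j) (hw₀ : ∑ j, w j = 0) :
    0 ≤ ∑ j, y j * w j := by
  cases n with
  | zero => simp
  | succ k =>
    have := sum_mul_nonneg_of_antitone_of_nonneg (y := fun j => y j - y (Fin.last k))
      (fun i j hij => sub_le_sub_right (hy hij) _) (fun j => sub_nonneg.mpr (hy (Fin.le_last j)))
      hw
    simpa [sub_mul, sum_sub_distrib, ← mul_sum, hw₀] using this

section Prefix

variable {n : ℕ}

def prefixSet (σ : Equiv.Perm (Fin n)) (m : ℕ) : Finset (Fin n) :=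
  ({j | (j : ℕ) < m} : Finset (Fin n)).map σ.toEmbedding

variable (σ : Equiv.Perm (Fin n))

theorem mem_prefixSet {m : ℕ} {i : Fin n} : i ∈ prefixSet σ m ↔ (σ.symm i : ℕ) < m := by
  simp [prefixSet, mem_map_equiv]

theorem sum_prefixSet {M : Type*} [AddCommMonoid M] (m : ℕ) (f : Fin n → M) :
    ∑ i ∈ prefixSet σ m, f i = ∑ j : Fin n with j.val < m, f (σ j) :=
  sum_map _ _ _

@[simp] theorem prefixSet_zero : prefixSet σ 0 = ∅ := by
  ext i; simp [mem_prefixSet]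

theorem prefixSet_self : prefixSet σ n = univ := by
  ext i; simp [mem_prefixSet]

theorem apply_notMem_prefixSet {m : ℕ} (hm : m < n) : σ ⟨m, hm⟩ ∉ prefixSet σ m := by
  simp [mem_prefixSet]

theorem prefixSet_succ {m : ℕ} (hm : m < n) :
    prefixSet σ (m + 1) = insert (σ ⟨m, hm⟩) (prefixSet σ m) := by
  ext i
  simp only [mem_insert, mem_prefixSet, ← σ.symm_apply_eq, Fin.ext_iff]
  omega

end Prefix

section Greedy

variable {n : ℕ} (F : Finset (Fin n) → ℝ) (σ : Equiv.Perm (Fin n))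

def greedyVector (i : Fin n) : ℝ :=
  F (prefixSet σ (σ.symm i + 1)) - F (prefixSet σ (σ.symm i))

@[simp] theorem greedyVector_apply_perm (j : Fin n) :
    greedyVector F σ (σ j) = F (prefixSet σ (j + 1)) - F (prefixSet σ j) := by
  simp [greedyVector]

theorem sum_greedyVector_prefixSet {m : ℕ} (hm : m ≤ n) :
    ∑ i ∈ prefixSet σ m, greedyVector F σ i = F (prefixSet σ m) - F ∅ := by
  induction m with
  | zero => simp
  | succ m ih =>
    rw [prefixSet_succ σ hm, sum_insert (apply_notMem_prefixSet σ hm), ih (by omega),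
      greedyVector_apply_perm, Fin.val_mk, ← prefixSet_succ σ hm]
    ring

theorem sum_greedyVector : ∑ i, greedyVector F σ i = F univ - F ∅ := by
  rw [← prefixSet_self σ, sum_greedyVector_prefixSet F σ le_rfl]

variable {F}

theorem Submodular.insert_sub_le_insert_sub (hF : Submodular F) {X Y : Finset (Fin n)}
    {a : Fin n} (hXY : X ⊆ Y) (ha : a ∉ Y) :
    F (insert a Y) - F Y ≤ F (insert a X) - F X := by
  have h := hF Y (insert a X)
  rw [union_insert, union_eq_left.mpr hXY, inter_insert_of_notMem ha,
    inter_eq_right.mpr hXY] at h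
  linarith

theorem Submodular.sum_greedyVector_le (hF : Submodular F) (A : Finset (Fin n)) :
    ∑ i ∈ A, greedyVector F σ i ≤ F A - F ∅ := by
  suffices h : ∀ m ≤ n,
      ∑ i ∈ prefixSet σ m ∩ A, greedyVector F σ i ≤ F (prefixSet σ m ∩ A) - F ∅ by
    simpa [prefixSet_self] using h n le_rfl
  intro m hm
  induction m with
  | zero => simp
  | succ m ih =>
    have hm' : m < n := hm
    have hnot := apply_notMem_prefixSet σ hm'
    rw [prefixSet_succ σ hm']
    by_cases ha : σ ⟨m, hm'⟩ ∈ A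
    · rw [insert_inter_of_mem ha, sum_insert (fun h => hnot (mem_inter.mp h).1),
        greedyVector_apply_perm, prefixSet_succ σ hm']
      have := hF.insert_sub_le_insert_sub (inter_subset_left (s₂ := A)) hnot
      linarith [ih hm'.le]
    · rw [insert_inter_of_notMem ha]
      exact ih hm'.le

end Greedy

theorem dotProduct_le_dotProduct_of_antitone {n : ℕ} {x u v : Fin n → ℝ}
    (σ : Equiv.Perm (Fin n)) (hx : Antitone (x ∘ σ))
    (hle : ∀ m ≤ n, ∑ i ∈ prefixSet σ m, u i ≤ ∑ i ∈ prefixSet σ m, v i)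
    (heq : ∑ i, u i = ∑ i, v i) :
    x ⬝ᵥ u ≤ x ⬝ᵥ v := by
  rw [← sub_nonneg, ← dotProduct_sub, dotProduct, ← Equiv.sum_comp σ]
  refine sum_mul_nonneg_of_antitone hx (fun m hm => ?_) ?_
  · rw [← sum_prefixSet]
    simpa [sum_sub_distrib] using hle m hm
  · rw [Equiv.sum_comp σ (v - u)]
    simp [sum_sub_distrib, heq]

section Lovasz

variable {n : ℕ}

noncomputable def sortDesc (x : Fin n → ℝ) : Equiv.Perm (Fin n) :=
  Fin.revPerm.trans (Tuple.sort x)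

theorem antitone_comp_sortDesc (x : Fin n → ℝ) : Antitone (x ∘ sortDesc x) :=
  fun _ _ hij => Tuple.monotone_sort x (Fin.rev_le_rev.mpr hij)

theorem prefixSet_sortDesc (x : Fin n → ℝ) (m : ℕ) :
    prefixSet (sortDesc x) m = univ.filter fun i => n - m ≤ ((Tuple.sort x).symm i : ℕ) := by
  ext i
  have := ((Tuple.sort x).symm i).isLt
  simp [mem_prefixSet, sortDesc, Fin.val_rev]
  omega

theorem lovasz_eq_add_dotProduct_greedyVector (F : Finset (Fin n) → ℝ) (x : Fin n → ℝ) :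
    lovasz F x = F ∅ + x ⬝ᵥ greedyVector F (sortDesc x) := by
  rw [lovasz, dotProduct,
    ← Equiv.sum_comp (sortDesc x) fun i => x i * greedyVector F (sortDesc x) i]
  congr 1
  refine sum_congr rfl fun j _ => ?_
  rw [greedyVector_apply_perm, prefixSet_sortDesc, prefixSet_sortDesc]
  rfl

variable {F : Finset (Fin n) → ℝ}

theorem Submodular.add_dotProduct_greedyVector_le_lovasz (hF : Submodular F)
    (τ : Equiv.Perm (Fin n)) (x : Fin n → ℝ) : F ∅ + x ⬝ᵥ greedyVector F τ ≤ lovasz F x := by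
  rw [lovasz_eq_add_dotProduct_greedyVector]
  refine (add_le_add_iff_left _).mpr <|
    dotProduct_le_dotProduct_of_antitone _ (antitone_comp_sortDesc x) (fun m hm => ?_) ?_
  · rw [sum_greedyVector_prefixSet F _ hm]
    exact hF.sum_greedyVector_le τ _
  · rw [sum_greedyVector, sum_greedyVector]

theorem Submodular.convexOn_lovasz (hF : Submodular F) : ConvexOn ℝ Set.univ (lovasz F) := by
  refine ⟨convex_univ, fun x _ y _ a b ha hb hab => ?_⟩
  set g := greedyVector F (sortDesc (a • x + b • y))
  calc lovasz F (a • x + b • y) = a * (F ∅ + x ⬝ᵥ g) + b * (F ∅ + y ⬝ᵥ g) := by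
        rw [lovasz_eq_add_dotProduct_greedyVector, add_dotProduct, smul_dotProduct,
          smul_dotProduct, smul_eq_mul, smul_eq_mul]
        linear_combination F ∅ * hab.symm
    _ ≤ a • lovasz F x + b • lovasz F y :=
        add_le_add (mul_le_mul_of_nonneg_left (hF.add_dotProduct_greedyVector_le_lovasz _ x) ha)
          (mul_le_mul_of_nonneg_left (hF.add_dotProduct_greedyVector_le_lovasz _ y) hb)

end Lovasz

section Converse

variable {n : ℕ}

theorem filter_val_lt_card_eq_of_isLowerSet {L : Finset (Fin n)}
    (hL : IsLowerSet (L : Set (Fin n))) :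
    ({j | j.val < #L} : Finset (Fin n)) = L := by
  rcases hL.eq_univ_or_Iio with h | ⟨a, h⟩
  · rw [coe_eq_univ] at h
    subst h
    ext j
    simp
  · rw [← coe_Iio, coe_inj] at h
    subst h
    ext j
    simp only [Fin.card_Iio, mem_filter, mem_univ, true_and, mem_Iio, Fin.lt_def]

theorem prefixSet_card_filter_le {x : Fin n → ℝ} {σ : Equiv.Perm (Fin n)}
    (hx : Antitone (x ∘ σ)) (t : ℝ) :
    prefixSet σ #{i | t ≤ x i} = ({i | t ≤ x i} : Finset (Fin n)) := by
  set L : Finset (Fin n) := {j | t ≤ x (σ j)}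
  have hL : ({i | t ≤ x i} : Finset (Fin n)) = L.map σ.toEmbedding := by
    ext i
    simp [L, mem_map_equiv]
  have hlower : IsLowerSet (L : Set (Fin n)) := fun i j hji hi => by
    simp only [L, coe_filter, mem_univ, true_and, Set.mem_ofPred_eq] at hi ⊢
    exact hi.trans (hx hji)
  rw [hL, card_map, prefixSet, filter_val_lt_card_eq_of_isLowerSet hlower]

theorem indicator_one_dotProduct {ι : Type*} [Fintype ι] (s : Finset ι) (v : ι → ℝ) :
    (s : Set ι).indicator 1 ⬝ᵥ v = ∑ i ∈ s, v i := by
  classical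
  simp only [dotProduct, Set.indicator_apply, mem_coe, Pi.one_apply, ite_mul, one_mul, zero_mul,
    Fintype.sum_ite_mem]

theorem lovasz_indicator_add_indicator (F : Finset (Fin n) → ℝ) {C D : Finset (Fin n)}
    (hCD : C ⊆ D) :
    lovasz F ((C : Set (Fin n)).indicator 1 + (D : Set (Fin n)).indicator 1) =
      F C + F D - F ∅ := by
  set x := (C : Set (Fin n)).indicator 1 + (D : Set (Fin n)).indicator (1 : Fin n → ℝ)
  have hx := antitone_comp_sortDesc x
  have hC : C = ({i | 2 ≤ x i} : Finset (Fin n)) := by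
    ext i
    by_cases hi : i ∈ C
    · simp [x, hi, hCD hi, one_add_one_eq_two]
    · by_cases hi' : i ∈ D <;> simp [x, hi, hi']
  have hD : D = ({i | 1 ≤ x i} : Finset (Fin n)) := by
    ext i
    by_cases hi : i ∈ C
    · simp [x, hi, hCD hi]
    · by_cases hi' : i ∈ D <;> simp [x, hi, hi']
  have hsum : ∀ S : Finset (Fin n), prefixSet (sortDesc x) #S = S →
      ∑ i ∈ S, greedyVector F (sortDesc x) i = F S - F ∅ := fun S hS => by
    have hSn : #S ≤ n := (card_le_univ S).trans_eq (Fintype.card_fin n)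
    simpa [hS] using sum_greedyVector_prefixSet F (sortDesc x) hSn
  rw [lovasz_eq_add_dotProduct_greedyVector, add_dotProduct, indicator_one_dotProduct,
    indicator_one_dotProduct, hsum C (hC ▸ prefixSet_card_filter_le hx 2),
    hsum D (hD ▸ prefixSet_card_filter_le hx 1)]
  ring

end Converse

theorem submodular_of_convexOn_lovasz {n : ℕ} {F : Finset (Fin n) → ℝ}
    (hF : ConvexOn ℝ Set.univ (lovasz F)) : Submodular F := by
  intro A B
  let ind : Finset (Fin n) → Fin n → ℝ := fun S => (S : Set (Fin n)).indicator 1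
  have hmid : (1 / 2 : ℝ) • (ind A + ind A) + (1 / 2 : ℝ) • (ind B + ind B)
      = ind (A ∩ B) + ind (A ∪ B) := by
    ext i
    have := Set.indicator_union_add_inter_apply (1 : Fin n → ℝ) (A : Set (Fin n)) B i
    simp only [Pi.add_apply, Pi.smul_apply, smul_eq_mul, ind, coe_inter, coe_union]
    linarith
  have h := hF.2 (Set.mem_univ (ind A + ind A)) (Set.mem_univ (ind B + ind B))
    (by norm_num : (0 : ℝ) ≤ 1 / 2) (by norm_num : (0 : ℝ) ≤ 1 / 2) (by norm_num)
  rw [hmid, lovasz_indicator_add_indicator F inter_subset_union,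
    lovasz_indicator_add_indicator F subset_rfl, lovasz_indicator_add_indicator F subset_rfl,
    smul_eq_mul, smul_eq_mul] at h
  linarith

/-- A set function is submodular iff its Lovász extension is convex. -/
theorem submodular_iff_lovasz_convex (n : ℕ) (F : Finset (Fin n) → ℝ) :
    Submodular F ↔ ConvexOn ℝ Set.univ (lovasz F) :=
  ⟨Submodular.convexOn_lovasz, submodular_of_convexOn_lovasz⟩
end
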